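/- Let 3 ≤ h ≤ k−1 and let A = {a₁ < a₂ < ⋯ < a_k} be a set of k positive integers. Let A_{h+1} = {a₁,…,a_{h+1}}. If |h^∧_± A_{h+1}| ≥ (h+1)² + t for some t ≥ 0, then |h^∧_± A| ≥ 2hk − h² + 1 + t. -/

import Mathlib

/-!
A signed sum over `A' = {a₁, …, a_{h+1}}` has absolute value at most the sum of the `h` elements
of `A'` that carry a nonzero sign, which is an ordinary `h`-fold sum of `A'`. Adjoining
`a_{h+2} < ⋯ < a_k` one at a time, each new maximum `b` creates `h` new `h`-fold sums beyond all
previous ones: if `T` is an `h`-subset of largest sum, swap one `t ∈ T` for `b`. Hence `A` has at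
least `h (k - h - 1)` ordinary `h`-fold sums exceeding every `h`-fold sum of `A'`; they and their
negatives are signed sums of `A` outside `h^∧_± A'`, and
`(h + 1)² + t + 2h (k - h - 1) = 2hk - h² + 1 + t`.
-/

open Finset

/-- The restricted `h`-fold signed sumset of a finite set `A` of integers:
all sums `∑ λᵢ aᵢ` with `λᵢ ∈ {-1,0,1}` and `∑ |λᵢ| = h`. -/
def signedSumset (h : ℕ) (A : Finset ℤ) : Set ℤ :=
  {s | ∃ f : ℤ → ℤ, (∀ a, f a = -1 ∨ f a = 0 ∨ f a = 1) ∧ (∀ a ∉ A, f a = 0) ∧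
    (∑ a ∈ A, |f a|) = (h : ℤ) ∧ s = ∑ a ∈ A, f a * a}

open scoped Pointwise

section RestrictedSumset

variable {α : Type*} [AddCommMonoid α] [LinearOrder α]

def restrictedSumset (h : ℕ) (B : Finset α) : Finset α :=
  (B.powersetCard h).image fun S => ∑ x ∈ S, x

theorem mem_restrictedSumset {h : ℕ} {B : Finset α} {s : α} :
    s ∈ restrictedSumset h B ↔ ∃ S ⊆ B, #S = h ∧ ∑ x ∈ S, x = s := by
  simp [restrictedSumset, mem_powersetCard, and_assoc]

theorem restrictedSumset_mono (h : ℕ) {B B' : Finset α} (hBB' : B ⊆ B') :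
    restrictedSumset h B ⊆ restrictedSumset h B' :=
  image_subset_image (powersetCard_mono hBB')

theorem mul_card_le_card_filter_restrictedSumset_union [IsOrderedCancelAddMonoid α] (h : ℕ)
    (C D : Finset α) (hC : h ≤ #C) (hCD : ∀ c ∈ C, ∀ d ∈ D, c < d) :
    h * #D ≤ #{s ∈ restrictedSumset h (C ∪ D) | ∀ c ∈ restrictedSumset h C, c < s} := by
  induction D using Finset.induction_on_max with
  | empty => simp
  | insert b D hDb ih =>
    have hCb : ∀ c ∈ C, c < b := fun c hc => hCD c hc b (mem_insert_self b D)
    specialize ih fun c hc d hd => hCD c hc d (mem_insert_of_mem hd)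
    set U := C ∪ D
    have hUb : ∀ u ∈ U, u < b := by
      intro u hu
      rcases mem_union.1 hu with hu | hu
      exacts [hCb u hu, hDb u hu]
    obtain ⟨T, hT, hTmax⟩ := exists_max_image (U.powersetCard h) (fun S => ∑ x ∈ S, x)
      (powersetCard_nonempty.2 (hC.trans (card_le_card subset_union_left)))
    rw [mem_powersetCard] at hT
    have hsum_le : ∀ s ∈ restrictedSumset h U, s ≤ ∑ x ∈ T, x := by
      intro s hs
      obtain ⟨S, hSU, hS, rfl⟩ := mem_restrictedSumset.1 hs
      exact hTmax S (mem_powersetCard.2 ⟨hSU, hS⟩)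
    set New := T.image fun t => b + ∑ x ∈ T.erase t, x
    have hNew_gt : ∀ s ∈ New, ∑ x ∈ T, x < s := by
      simp only [New, mem_image, forall_exists_index, and_imp]
      rintro _ t ht rfl
      rw [← sum_erase_add T (fun x => x) ht, add_comm b]
      exact add_lt_add_right (hUb t (hT.1 ht)) _
    have hNew_card : #New = h := by
      rw [card_image_of_injOn, hT.2]
      intro t ht t' ht' htt'
      have := (sum_erase_add T id ht).trans (sum_erase_add T id ht').symm
      simp only [id, add_left_cancel htt'] at this
      exact add_left_cancel this
    have hNew_sub : New ⊆ restrictedSumset h (insert b U) := by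
      simp only [New, subset_iff, mem_image, forall_exists_index, and_imp]
      rintro _ t ht rfl
      have hbT : b ∉ T.erase t := fun hb => (hUb b (hT.1 (mem_of_mem_erase hb))).false
      refine mem_restrictedSumset.2 ⟨insert b (T.erase t),
        insert_subset_insert b ((erase_subset t T).trans hT.1), ?_, sum_insert hbT⟩
      have : 0 < #T := card_pos.2 ⟨t, ht⟩
      rw [card_insert_of_notMem hbT, card_erase_of_mem ht]
      omega
    set Old := {s ∈ restrictedSumset h U | ∀ c ∈ restrictedSumset h C, c < s}
    have hdisj : Disjoint Old New := disjoint_left.2 fun s hs hs' =>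
      (hNew_gt s hs').not_ge (hsum_le s (mem_filter.1 hs).1)
    have hsub : Old ∪ New ⊆
        {s ∈ restrictedSumset h (insert b U) | ∀ c ∈ restrictedSumset h C, c < s} := by
      refine union_subset (filter_subset_filter _ (restrictedSumset_mono h (subset_insert b U)))
        fun s hs => mem_filter.2 ⟨hNew_sub hs, fun c hc => ?_⟩
      exact (hsum_le c (restrictedSumset_mono h subset_union_left hc)).trans_lt (hNew_gt s hs)
    rw [union_insert, card_insert_of_notMem fun hb => (hDb b hb).false, mul_add_one]
    calc h * #D + h ≤ #Old + #New := add_le_add ih hNew_card.ge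
      _ = #(Old ∪ New) := (card_union_of_disjoint hdisj).symm
      _ ≤ _ := card_le_card hsub

end RestrictedSumset

theorem signedSumset_mono (h : ℕ) {A B : Finset ℤ} (hAB : A ⊆ B) :
    signedSumset h A ⊆ signedSumset h B := by
  rintro s ⟨f, hf, hfA, hcard, rfl⟩
  have hfB : ∀ x ∈ B, x ∉ A → f x = 0 := fun x _ hx => hfA x hx
  refine ⟨f, hf, fun x hx => hfA x fun h => hx (hAB h), ?_, ?_⟩
  · rwa [← sum_subset hAB fun x hxB hx => by simp [hfB x hxB hx]]
  · rw [← sum_subset hAB fun x hxB hx => by simp [hfB x hxB hx]]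

theorem neg_mem_signedSumset {h : ℕ} {A : Finset ℤ} {s : ℤ} (hs : s ∈ signedSumset h A) :
    -s ∈ signedSumset h A := by
  obtain ⟨f, hf, hfA, hcard, rfl⟩ := hs
  refine ⟨-f, fun x => ?_, fun x hx => by simp [hfA x hx], by simpa using hcard, by simp⟩
  rcases hf x with hx | hx | hx <;> simp [hx]

theorem mem_signedSumset_of_mem_restrictedSumset {h : ℕ} {A : Finset ℤ} {s : ℤ}
    (hs : s ∈ restrictedSumset h A) : s ∈ signedSumset h A := by
  obtain ⟨S, hSA, rfl, rfl⟩ := mem_restrictedSumset.1 hs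
  refine ⟨fun x => if x ∈ S then 1 else 0, fun x => ?_, fun x hx => if_neg fun h => hx (hSA h),
    ?_, ?_⟩
  · by_cases hx : x ∈ S <;> simp [hx]
  · simp [apply_ite abs, sum_ite_mem, inter_eq_right.2 hSA]
  · simp [ite_mul, sum_ite_mem, inter_eq_right.2 hSA]

theorem exists_abs_le_of_mem_signedSumset {h : ℕ} {A : Finset ℤ} {s : ℤ}
    (hs : s ∈ signedSumset h A) : ∃ S ⊆ A, #S = h ∧ |s| ≤ ∑ x ∈ S, |x| := by
  obtain ⟨f, hf, -, hcard, rfl⟩ := hs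
  have habs : ∀ x, |f x| = if f x ≠ 0 then 1 else 0 := fun x => by
    rcases hf x with hx | hx | hx <;> simp [hx]
  refine ⟨{x ∈ A | f x ≠ 0}, filter_subset _ _, ?_, ?_⟩
  · simp only [habs] at hcard
    rw [card_filter]
    exact_mod_cast hcard
  · calc |∑ x ∈ A, f x * x| ≤ ∑ x ∈ A, |f x * x| := abs_sum_le_sum_abs _ _
      _ = ∑ x ∈ {x ∈ A | f x ≠ 0}, |x| := by simp [abs_mul, habs, sum_filter, ite_mul]

theorem signedSumset_finite (h : ℕ) (A : Finset ℤ) : (signedSumset h A).Finite :=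
  (Set.finite_Icc (-∑ x ∈ A, |x|) (∑ x ∈ A, |x|)).subset fun s hs => by
    obtain ⟨S, hSA, -, hs⟩ := exists_abs_le_of_mem_signedSumset hs
    exact abs_le.1 (hs.trans (sum_le_sum_of_subset_of_nonneg hSA fun _ _ _ => abs_nonneg _))

theorem ncard_signedSumset_add_le_ncard_signedSumset_union (h : ℕ) (C D : Finset ℤ)
    (hC : h ≤ #C) (hpos : ∀ c ∈ C, 0 < c) (hCD : ∀ c ∈ C, ∀ d ∈ D, c < d) :
    (signedSumset h C).ncard + 2 * (h * #D) ≤ (signedSumset h (C ∪ D)).ncard := by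
  set P := {s ∈ restrictedSumset h (C ∪ D) | ∀ c ∈ restrictedSumset h C, c < s}
  have hP_gt : ∀ s ∈ P, ∀ S ⊆ C, #S = h → ∑ x ∈ S, |x| < s := fun s hs S hSC hS => by
    rw [sum_congr rfl fun x hx => abs_of_pos (hpos x (hSC hx))]
    exact (mem_filter.1 hs).2 _ (mem_restrictedSumset.2 ⟨S, hSC, hS, rfl⟩)
  have hmid : ∀ m ∈ signedSumset h C, ∀ s ∈ P, |m| < s := fun m hm s hs => by
    obtain ⟨S, hSC, hS, hmS⟩ := exists_abs_le_of_mem_signedSumset hm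
    exact hmS.trans_lt (hP_gt s hs S hSC hS)
  have hP_pos : ∀ s ∈ P, 0 < s := fun s hs => by
    obtain ⟨S, hSC, hS⟩ := exists_subset_card_eq hC
    exact (sum_nonneg fun x _ => abs_nonneg x).trans_lt (hP_gt s hs S hSC hS)
  have hP_sub : (P : Set ℤ) ∪ ↑(-P) ⊆ signedSumset h (C ∪ D) := by
    rintro s (hs | hs)
    · exact mem_signedSumset_of_mem_restrictedSumset (mem_filter.1 hs).1
    · rw [coe_neg, Set.mem_neg, mem_coe] at hs
      simpa using
        neg_mem_signedSumset (mem_signedSumset_of_mem_restrictedSumset (mem_filter.1 hs).1)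
  have hdisj_P : Disjoint (P : Set ℤ) ↑(-P) := Set.disjoint_left.2 fun s hs hs' => by
    rw [coe_neg, Set.mem_neg, mem_coe] at hs'
    linarith [hP_pos _ hs, hP_pos _ hs']
  have hdisj_mid : Disjoint (signedSumset h C) (↑P ∪ ↑(-P)) :=
    Set.disjoint_left.2 fun m hm hm' => by
      rcases hm' with hm' | hm'
      · exact (hmid m hm m hm').not_ge (le_abs_self m)
      · rw [coe_neg, Set.mem_neg, mem_coe] at hm'
        exact (hmid m hm _ hm').not_ge (neg_le_abs m)
  calc (signedSumset h C).ncard + 2 * (h * #D) ≤ (signedSumset h C).ncard + (#P + #(-P)) := by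
        have hP_card : h * #D ≤ #P := mul_card_le_card_filter_restrictedSumset_union h C D hC hCD
        rw [card_neg]
        omega
    _ = (signedSumset h C ∪ (↑P ∪ ↑(-P))).ncard := by
        rw [Set.ncard_union_eq hdisj_mid (signedSumset_finite h C),
          Set.ncard_union_eq hdisj_P, Set.ncard_coe_finset, Set.ncard_coe_finset]
    _ ≤ _ := Set.ncard_le_ncard (Set.union_subset (signedSumset_mono h subset_union_left) hP_sub)
        (signedSumset_finite h _)

theorem stmt2_general (h k t : ℕ) (hhk : h ≤ k - 1) (hk : 4 ≤ k)
    (a : ℕ → ℤ) (hpos : ∀ i ∈ Finset.Icc 1 k, 0 < a i)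
    (hmono : ∀ i ∈ Finset.Icc 1 k, ∀ j ∈ Finset.Icc 1 k, i < j → a i < a j)
    (hsub : (h + 1) ^ 2 + t ≤
      (signedSumset h ((Finset.Icc 1 (h + 1)).image a)).ncard) :
    2 * h * k - h ^ 2 + 1 + t ≤
      (signedSumset h ((Finset.Icc 1 k).image a)).ncard := by
  have hinj : Set.InjOn a (Icc 1 k : Set ℕ) := StrictMonoOn.injOn hmono
  have hlow : Icc 1 (h + 1) ⊆ Icc 1 k := Icc_subset_Icc_right (show h + 1 ≤ k by omega)
  have hhigh : Icc (h + 2) k ⊆ Icc 1 k := Icc_subset_Icc_left (show 1 ≤ h + 2 by omega)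
  have hsplit : Icc 1 k = Icc 1 (h + 1) ∪ Icc (h + 2) k := by
    ext i
    simp only [mem_Icc, mem_union]
    omega
  have key := ncard_signedSumset_add_le_ncard_signedSumset_union h
    ((Icc 1 (h + 1)).image a) ((Icc (h + 2) k).image a)
    (by rw [card_image_of_injOn (hinj.mono (coe_subset.2 hlow)), Nat.card_Icc]; omega)
    (forall_mem_image.2 fun i hi => hpos i (hlow hi))
    (forall_mem_image.2 fun i hi => forall_mem_image.2 fun j hj =>
      hmono i (hlow hi) j (hhigh hj) (by simp only [mem_Icc] at hi hj; omega))
  rw [← image_union, ← hsplit, card_image_of_injOn (hinj.mono (coe_subset.2 hhigh)),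
    Nat.card_Icc] at key
  obtain ⟨d, rfl⟩ : ∃ d, k = h + 1 + d := ⟨k - (h + 1), by omega⟩
  have hsq : 2 * h * (h + 1 + d) - h ^ 2 = h ^ 2 + 2 * h + 2 * h * d := by
    rw [show 2 * h * (h + 1 + d) = h ^ 2 + (h ^ 2 + 2 * h + 2 * h * d) by ring,
      Nat.add_sub_cancel_left]
  have hd : h + 1 + d + 1 - (h + 2) = d := by omega
  rw [hsq]
  rw [hd] at key
  nlinarith

theorem stmt2 (h k t : ℕ) (hh : 3 ≤ h) (hhk : h ≤ k - 1) (hk : 4 ≤ k)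
    (a : ℕ → ℤ) (hpos : ∀ i ∈ Finset.Icc 1 k, 0 < a i)
    (hmono : ∀ i ∈ Finset.Icc 1 k, ∀ j ∈ Finset.Icc 1 k, i < j → a i < a j)
    (hsub : (h + 1) ^ 2 + t ≤
      (signedSumset h ((Finset.Icc 1 (h + 1)).image a)).ncard) :
    2 * h * k - h ^ 2 + 1 + t ≤
      (signedSumset h ((Finset.Icc 1 k).image a)).ncard :=
  stmt2_general h k t hhk hk a hpos hmono hsub
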